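/- arXiv:2208.08922 — 2 statements merged into one kernel-verified Lean document; each statement's English description precedes it below -/
import Mathlib

section
/- Fix ε ∈ (0, √2). Partition [z₁,z₂] by points x_j = z₁ + εj. If a continuous function B satisfies B(x_j) > −x_j² + 1 at every mesh point and the bridged part B^{[x_j,x_{j+1}]}(x) = B(x) − linear interpolation of B between x_j and x_{j+1} satisfies inf B^{[x_j,x_{j+1}]} ≥ −1/2 on every mesh interval, then B(x) > −x² for all x ∈ [z₁, z₂]. The key inequality is: for all y ∈ [0,1], ε²·y(1−y) < 1/2 whenever ε < √2. -/
open Real Set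

/-!
On a mesh interval `[a, b]` the chord of the convex function `u ↦ u²` exceeds `x²` by
`(x - a)(b - x) ≤ (b - a)² / 4 = ε² / 4 < 1/2`. Hence the linear interpolation of the mesh
values is at least `-x² + 1 - (x - a)(b - x) > -x² + 1/2`, and the bridge bound loses at most `1/2`.
-/

lemma sq_mul_mul_one_sub_lt_half {ε : ℝ} (hε : ε ^ 2 < 2) (y : ℝ) :
    ε ^ 2 * (y * (1 - y)) < 1 / 2 := by
  nlinarith [four_mul_le_sq_add y (1 - y), sq_nonneg ε]

lemma interpolation_neg_sq_add_one {a b h x : ℝ} (hab : b - a = h) (hh : h ≠ 0) :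
    (b - x) / h * (-a ^ 2 + 1) + (x - a) / h * (-b ^ 2 + 1) = -x ^ 2 + 1 - (x - a) * (b - x) := by
  subst hab
  field_simp
  ring

lemma neg_sq_lt_of_le_interpolation {a b h x Ba Bb Bx : ℝ} (hab : b - a = h) (hh : 0 < h)
    (hh2 : h ^ 2 < 2) (hx : x ∈ Icc a b) (ha : -a ^ 2 + 1 ≤ Ba) (hb : -b ^ 2 + 1 ≤ Bb)
    (hbridge : -(1 / 2) ≤ Bx - ((b - x) / h * Ba + (x - a) / h * Bb)) :
    -x ^ 2 < Bx := by
  obtain ⟨hax, hxb⟩ := hx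
  have hinterp : -x ^ 2 + 1 - (x - a) * (b - x) ≤ (b - x) / h * Ba + (x - a) / h * Bb := by
    rw [← interpolation_neg_sq_add_one hab hh.ne']
    have : 0 ≤ b - x := by linarith
    have : 0 ≤ x - a := by linarith
    gcongr
  have hgap : (x - a) * (b - x) < 1 / 2 := by
    nlinarith [four_mul_le_sq_add (x - a) (b - x)]
  linarith

lemma exists_mem_Icc_mesh_cell {ε z x : ℝ} {N : ℕ} (hN : 0 < N) (hx : x ∈ Icc z (z + ε * N)) :
    ∃ j < N, x ∈ Icc (z + ε * j) (z + ε * (j + 1)) := by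
  induction N, hN using Nat.le_induction with
  | base => exact ⟨0, one_pos, by simpa using hx⟩
  | succ n _ ih =>
    by_cases hxn : x ≤ z + ε * n
    · obtain ⟨j, hj, hxj⟩ := ih ⟨hx.1, hxn⟩
      exact ⟨j, by omega, hxj⟩
    · exact ⟨n, by omega, le_of_not_ge hxn, by exact_mod_cast hx.2⟩

theorem mesh_parabola_inclusion_general (ε z₁ : ℝ) (hε0 : 0 < ε) (hε : ε < Real.sqrt 2)
    (N : ℕ) (B : ℝ → ℝ)
    (hmesh : ∀ j ≤ N, -(z₁ + ε * j) ^ 2 + 1 ≤ B (z₁ + ε * j))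
    (hbridge : ∀ j < N, ∀ x ∈ Set.Icc (z₁ + ε * j) (z₁ + ε * (j + 1)),
        -(1 / 2) ≤ B x - (((z₁ + ε * (j + 1)) - x) / ε * B (z₁ + ε * j) +
          (x - (z₁ + ε * j)) / ε * B (z₁ + ε * (j + 1)))) :
    (∀ x ∈ Set.Icc z₁ (z₁ + ε * N), -x ^ 2 < B x) ∧
    (∀ y ∈ Set.Icc (0 : ℝ) 1, ε ^ 2 * (y * (1 - y)) < 1 / 2) := by
  have hε2 : ε ^ 2 < 2 := (Real.lt_sqrt hε0.le).1 hε
  refine ⟨fun x hx => ?_, fun y _ => sq_mul_mul_one_sub_lt_half hε2 y⟩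
  rcases N.eq_zero_or_pos with rfl | hN
  · obtain rfl : x = z₁ := by simpa using hx
    have := hmesh 0 le_rfl
    simp only [CharP.cast_eq_zero, mul_zero, add_zero] at this
    linarith
  · obtain ⟨j, hj, hxj⟩ := exists_mem_Icc_mesh_cell hN hx
    have hnext := hmesh (j + 1) hj
    push_cast at hnext
    exact neg_sq_lt_of_le_interpolation (by ring) hε0 hε2 hxj (hmesh j hj.le) hnext
      (hbridge j hj x hxj)

/-- Fix `ε ∈ (0, √2)` and mesh points `x_j = z₁ + εj`, `j = 0, …, N`, with `z₂ = z₁ + εN`.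
If a continuous function `B` satisfies `B(x_j) ≥ −x_j² + 1` at every mesh point and the
bridged part of `B` on each mesh interval (obtained by subtracting the linear interpolation
of the mesh values) stays above `−1/2`, then `B(x) > −x²` on all of `[z₁, z₂]`.
The key inequality is that `ε²·y(1−y) < 1/2` for all `y ∈ [0,1]` whenever `ε < √2`. -/
theorem mesh_parabola_inclusion (ε z₁ : ℝ) (hε0 : 0 < ε) (hε : ε < Real.sqrt 2)
    (N : ℕ) (B : ℝ → ℝ) (hcont : Continuous B)
    (hmesh : ∀ j ≤ N, -(z₁ + ε * j) ^ 2 + 1 ≤ B (z₁ + ε * j))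
    (hbridge : ∀ j < N, ∀ x ∈ Set.Icc (z₁ + ε * j) (z₁ + ε * (j + 1)),
        -(1 / 2) ≤ B x - (((z₁ + ε * (j + 1)) - x) / ε * B (z₁ + ε * j) +
          (x - (z₁ + ε * j)) / ε * B (z₁ + ε * (j + 1)))) :
    (∀ x ∈ Set.Icc z₁ (z₁ + ε * N), -x ^ 2 < B x) ∧
    (∀ y ∈ Set.Icc (0 : ℝ) 1, ε ^ 2 * (y * (1 - y)) < 1 / 2) :=
  mesh_parabola_inclusion_general ε z₁ hε0 hε N B hmesh hbridge
end

section
/- Suppose that for some constants M and all θ > θ₀ and 0 < s ≤ θ^{1/4}, a positive function g : ℝ → (0,∞) satisfies g(θ+s) ≥ g(θ)·exp(−2sθ^{1/2} − M). Suppose also g(θ₀) ≥ c > 0. Then there exists M' < ∞ such that for all sufficiently large θ, g(θ) ≥ exp(−(4/3)θ^{3/2} − M'θ^{3/4}). -/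
open Real

noncomputable def Vfun (K y : ℝ) : ℝ := (4/3) * y ^ ((3:ℝ)/2) + K * y ^ ((3:ℝ)/4)

lemma lem32 (x s : ℝ) (hx : 0 ≤ x) (hs : 0 ≤ s) :
    2 * s * x ^ ((1:ℝ)/2) ≤ (4/3) * ((x + s) ^ ((3:ℝ)/2) - x ^ ((3:ℝ)/2)) := by
  have hxs : (0:ℝ) ≤ x + s := by linarith
  set u := x ^ ((1:ℝ)/2) with hu
  set v := (x + s) ^ ((1:ℝ)/2) with hv
  have hu0 : 0 ≤ u := Real.rpow_nonneg hx _
  have hv0 : 0 ≤ v := Real.rpow_nonneg hxs _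
  have huv : u ≤ v := Real.rpow_le_rpow hx (by linarith) (by norm_num)
  have hu2 : u ^ 2 = x := by
    rw [hu, ← Real.rpow_natCast (x ^ ((1:ℝ)/2)) 2, ← Real.rpow_mul hx]; norm_num
  have hv2 : v ^ 2 = x + s := by
    rw [hv, ← Real.rpow_natCast ((x+s) ^ ((1:ℝ)/2)) 2, ← Real.rpow_mul hxs]; norm_num
  have hx3 : x ^ ((3:ℝ)/2) = u ^ 3 := by
    rw [hu, ← Real.rpow_natCast (x ^ ((1:ℝ)/2)) 3, ← Real.rpow_mul hx]; norm_num
  have hxs3 : (x + s) ^ ((3:ℝ)/2) = v ^ 3 := by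
    rw [hv, ← Real.rpow_natCast ((x+s) ^ ((1:ℝ)/2)) 3, ← Real.rpow_mul hxs]; norm_num
  have hs' : s = v ^ 2 - u ^ 2 := by rw [hu2, hv2]; ring
  rw [hx3, hxs3, hs']
  nlinarith [mul_nonneg (sq_nonneg (v - u)) (show (0:ℝ) ≤ 2*v + u by linarith)]

lemma lem34 (x : ℝ) (hx : 1 ≤ x) :
    (1:ℝ)/2 ≤ (x + x ^ ((1:ℝ)/4)) ^ ((3:ℝ)/4) - x ^ ((3:ℝ)/4) := by
  have hx0 : (0:ℝ) ≤ x := by linarith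
  set p := x ^ ((1:ℝ)/4) with hpd
  have hp1 : 1 ≤ p := by
    have h := Real.rpow_le_rpow zero_le_one hx (by norm_num : (0:ℝ) ≤ 1/4)
    rwa [Real.one_rpow] at h
  have hp0 : (0:ℝ) ≤ p := by linarith
  have hxs : (0:ℝ) ≤ x + p := by linarith
  set q := (x + p) ^ ((1:ℝ)/4) with hqd
  have hq1 : 1 ≤ q := by
    have h := Real.rpow_le_rpow zero_le_one (show (1:ℝ) ≤ x + p by linarith) (by norm_num : (0:ℝ) ≤ 1/4)
    rwa [Real.one_rpow] at h
  have hpq : p ≤ q := Real.rpow_le_rpow hx0 (by linarith) (by norm_num)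
  have hp4 : p ^ 4 = x := by
    rw [hpd, ← Real.rpow_natCast (x ^ ((1:ℝ)/4)) 4, ← Real.rpow_mul hx0]; norm_num
  have hq4 : q ^ 4 = x + p := by
    rw [hqd, ← Real.rpow_natCast ((x+p) ^ ((1:ℝ)/4)) 4, ← Real.rpow_mul hxs]; norm_num
  have hx34 : x ^ ((3:ℝ)/4) = p ^ 3 := by
    rw [hpd, ← Real.rpow_natCast (x ^ ((1:ℝ)/4)) 3, ← Real.rpow_mul hx0]; norm_num
  have hxs34 : (x + p) ^ ((3:ℝ)/4) = q ^ 3 := by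
    rw [hqd, ← Real.rpow_natCast ((x+p) ^ ((1:ℝ)/4)) 3, ← Real.rpow_mul hxs]; norm_num
  rw [hxs34, hx34]
  have h1 : 3 * (q^4 - p^4) ≤ 4 * (q^3 - p^3) * q := by
    nlinarith [mul_nonneg (sq_nonneg (q - p)) (show (0:ℝ) ≤ q^2 + 2*p*q + 3*p^2 by positivity)]
  have h2 : (2*q)^4 ≤ (3*p)^4 := by
    nlinarith [mul_nonneg (mul_nonneg hp0 (show (0:ℝ) ≤ p - 1 by linarith))
      (show (0:ℝ) ≤ p^2 + p + 1 by positivity)]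
  have h3 : 2*q ≤ 3*p := le_of_pow_le_pow_left₀ (by norm_num) (by positivity) h2
  nlinarith [h1, h3, hq1, hp4, hq4]

lemma step_ineq (K M x : ℝ) (hx : 1 ≤ x) (hKM : 2 * M ≤ K) (hK0 : 0 ≤ K) :
    2 * x ^ ((1:ℝ)/4) * x ^ ((1:ℝ)/2) + M ≤ Vfun K (x + x ^ ((1:ℝ)/4)) - Vfun K x := by
  have h1 := lem32 x (x ^ ((1:ℝ)/4)) (by linarith) (Real.rpow_nonneg (by linarith) _)
  have h2 := lem34 x hx
  unfold Vfun
  nlinarith [h1, h2]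

noncomputable def chainSeq (a : ℝ) : ℕ → ℝ
  | 0 => a
  | n+1 => chainSeq a n + (chainSeq a n) ^ ((1:ℝ)/4)

/-- Suppose a positive function `g` satisfies `g(θ+s) ≥ g(θ)·exp(−2sθ^{1/2} − M)` for all
`θ > θ₀` and `0 < s ≤ θ^{1/4}`, and `g(θ₀) ≥ c > 0`.  Then there exists `M' < ∞` such that
for all sufficiently large `θ`, `g(θ) ≥ exp(−(4/3)θ^{3/2} − M'θ^{3/4})`. -/
theorem density_lower_bound_iteration (g : ℝ → ℝ) (hg : ∀ x, 0 < g x)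
    (M θ₀ c : ℝ) (hθ₀ : 0 < θ₀) (hc : 0 < c)
    (hrec : ∀ θ, θ₀ < θ → ∀ s, 0 < s → s ≤ θ ^ ((1 : ℝ) / 4) →
      g θ * Real.exp (-2 * s * θ ^ ((1 : ℝ) / 2) - M) ≤ g (θ + s))
    (hinit : c ≤ g θ₀) :
    ∃ M' : ℝ, ∃ θ₁ : ℝ, ∀ θ, θ₁ ≤ θ →
      Real.exp (-(4 / 3) * θ ^ ((3 : ℝ) / 2) - M' * θ ^ ((3 : ℝ) / 4)) ≤ g θ := by
  set a : ℝ := max θ₀ 1 + 1 with ha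
  have haθ : θ₀ < a := lt_of_le_of_lt (le_max_left θ₀ 1) (by rw [ha]; linarith [le_max_left θ₀ 1])
  have ha1 : 1 ≤ a := by
    have := le_max_right θ₀ 1
    rw [ha]; linarith
  set K : ℝ := 2 * max M 0 with hK
  have hK0 : 0 ≤ K := by positivity
  have hKM : 2 * M ≤ K := by
    have := le_max_left M 0
    rw [hK]; linarith
  set t : ℕ → ℝ := chainSeq a with ht
  have ht0 : t 0 = a := rfl
  have htS : ∀ n, t (n+1) = t n + (t n) ^ ((1:ℝ)/4) := fun n => rfl
  have hta : ∀ n, a ≤ t n := by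
    intro n; induction n with
    | zero => exact le_of_eq ht0.symm
    | succ n ih =>
      have h0 : (0:ℝ) ≤ t n := by linarith
      have := Real.rpow_nonneg h0 ((1:ℝ)/4)
      rw [htS]; linarith
  have htlb : ∀ n, a + n ≤ t n := by
    intro n; induction n with
    | zero => simp [ht0]
    | succ n ih =>
      have h1 : (1:ℝ) ≤ (t n) ^ ((1:ℝ)/4) := by
        have h := Real.rpow_le_rpow zero_le_one (le_trans ha1 (hta n)) (by norm_num : (0:ℝ) ≤ 1/4)
        rwa [Real.one_rpow] at h
      rw [htS]; push_cast; linarith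
  have hstep : ∀ x, a ≤ x →
      g x * Real.exp (Vfun K x - Vfun K (x + x ^ ((1:ℝ)/4))) ≤ g (x + x ^ ((1:ℝ)/4)) := by
    intro x hax
    have hx1 : 1 ≤ x := le_trans ha1 hax
    have hs : 0 < x ^ ((1:ℝ)/4) := Real.rpow_pos_of_pos (by linarith) _
    have h := hrec x (lt_of_lt_of_le haθ hax) (x ^ ((1:ℝ)/4)) hs le_rfl
    refine le_trans ?_ h
    have hV := step_ineq K M x hx1 hKM hK0
    have hle : Vfun K x - Vfun K (x + x ^ ((1:ℝ)/4))
        ≤ -2 * (x ^ ((1:ℝ)/4)) * x ^ ((1:ℝ)/2) - M := by linarith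
    exact mul_le_mul_of_nonneg_left (Real.exp_le_exp.2 hle) (le_of_lt (hg x))
  have hchain : ∀ n, g a * Real.exp (Vfun K a - Vfun K (t n)) ≤ g (t n) := by
    intro n; induction n with
    | zero => rw [ht0]; simp
    | succ n ih =>
      have h1 := hstep (t n) (hta n)
      rw [← htS n] at h1
      calc g a * Real.exp (Vfun K a - Vfun K (t (n+1)))
          = (g a * Real.exp (Vfun K a - Vfun K (t n)))
              * Real.exp (Vfun K (t n) - Vfun K (t (n+1))) := by
            rw [show Vfun K a - Vfun K (t (n+1))
                = (Vfun K a - Vfun K (t n)) + (Vfun K (t n) - Vfun K (t (n+1))) by ring,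
              Real.exp_add, ← mul_assoc]
        _ ≤ g (t n) * Real.exp (Vfun K (t n) - Vfun K (t (n+1))) :=
            mul_le_mul_of_nonneg_right ih (Real.exp_nonneg _)
        _ ≤ g (t (n+1)) := h1
  set C : ℝ := g a * Real.exp (Vfun K a - |M|) with hC
  have hC0 : 0 < C := mul_pos (hg a) (Real.exp_pos _)
  have hmain : ∀ θ, a ≤ θ → C * Real.exp (-(Vfun K θ)) ≤ g θ := by
    intro θ hθ
    have hex : ∃ n : ℕ, θ < t n := by
      obtain ⟨n, hn⟩ := exists_nat_gt (θ - a)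
      exact ⟨n, by have := htlb n; linarith⟩
    have hN : θ < t (Nat.find hex) := Nat.find_spec hex
    have hN0 : Nat.find hex ≠ 0 := by
      intro h; rw [h, ht0] at hN; linarith
    obtain ⟨n, hn⟩ := Nat.exists_eq_succ_of_ne_zero hN0
    have hle : t n ≤ θ := by
      have hmin := Nat.find_min hex (show n < Nat.find hex by omega)
      exact not_lt.mp hmin
    rw [hn] at hN
    have hlt : θ < t n + (t n) ^ ((1:ℝ)/4) := by rw [← htS n]; exact hN
    have htn1 : 1 ≤ t n := le_trans ha1 (hta n)
    have hMabs : M ≤ |M| := le_abs_self M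
    -- key lower bound
    have hlow : g a * Real.exp (Vfun K a - |M| - Vfun K θ) ≤ g θ := by
      rcases eq_or_lt_of_le hle with heq | hlt'
      · -- θ = t n
        have h := hchain n
        rw [heq] at h
        refine le_trans ?_ h
        apply mul_le_mul_of_nonneg_left (Real.exp_le_exp.2 ?_) (le_of_lt (hg a))
        have : (0:ℝ) ≤ |M| := abs_nonneg M
        linarith
      · -- t n < θ : one last partial step s = θ - t n
        set s : ℝ := θ - t n with hsdef
        have hs0 : 0 < s := by rw [hsdef]; linarith
        have hs1 : s ≤ (t n) ^ ((1:ℝ)/4) := by rw [hsdef]; linarith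
        have h := hrec (t n) (lt_of_lt_of_le haθ (hta n)) s hs0 hs1
        have hts : t n + s = θ := by rw [hsdef]; ring
        rw [hts] at h
        -- V θ - V (t n) ≥ 2 s (t n)^{1/2}
        have h32 := lem32 (t n) s (by linarith) (le_of_lt hs0)
        rw [hts] at h32
        have h34 : (t n) ^ ((3:ℝ)/4) ≤ θ ^ ((3:ℝ)/4) :=
          Real.rpow_le_rpow (by linarith) (le_of_lt hlt') (by norm_num)
        have hVdiff : 2 * s * (t n) ^ ((1:ℝ)/2) ≤ Vfun K θ - Vfun K (t n) := by
          unfold Vfun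
          nlinarith [mul_le_mul_of_nonneg_left h34 hK0]
        calc g a * Real.exp (Vfun K a - |M| - Vfun K θ)
            ≤ g a * Real.exp (Vfun K a - Vfun K (t n) + (-2 * s * (t n) ^ ((1:ℝ)/2) - M)) := by
              apply mul_le_mul_of_nonneg_left (Real.exp_le_exp.2 ?_) (le_of_lt (hg a))
              linarith
          _ = (g a * Real.exp (Vfun K a - Vfun K (t n)))
              * Real.exp (-2 * s * (t n) ^ ((1:ℝ)/2) - M) := by
              rw [Real.exp_add, ← mul_assoc]
          _ ≤ g (t n) * Real.exp (-2 * s * (t n) ^ ((1:ℝ)/2) - M) :=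
              mul_le_mul_of_nonneg_right (hchain n) (Real.exp_nonneg _)
          _ ≤ g θ := h
    refine le_trans (le_of_eq ?_) hlow
    rw [hC, show Vfun K a - |M| - Vfun K θ = (Vfun K a - |M|) + -(Vfun K θ) by ring,
      Real.exp_add, ← mul_assoc]
  -- choose M' and θ₁
  refine ⟨K + max 0 (-(Real.log C)), a, fun θ hθ => ?_⟩
  have h1 : (1:ℝ) ≤ θ ^ ((3:ℝ)/4) := by
    have h := Real.rpow_le_rpow zero_le_one (show (1:ℝ) ≤ θ by linarith) (by norm_num : (0:ℝ) ≤ 3/4)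
    rwa [Real.one_rpow] at h
  refine le_trans ?_ (hmain θ hθ)
  have key : -(4 / 3) * θ ^ ((3:ℝ)/2) - (K + max 0 (-(Real.log C))) * θ ^ ((3:ℝ)/4)
      ≤ Real.log C + -(Vfun K θ) := by
    unfold Vfun
    have h2 : (0:ℝ) ≤ max 0 (-(Real.log C)) := le_max_left _ _
    have h3 : -(Real.log C) ≤ max 0 (-(Real.log C)) := le_max_right _ _
    nlinarith [mul_le_mul_of_nonneg_left h1 h2]
  calc Real.exp (-(4 / 3) * θ ^ ((3:ℝ)/2) - (K + max 0 (-(Real.log C))) * θ ^ ((3:ℝ)/4))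
      ≤ Real.exp (Real.log C + -(Vfun K θ)) := Real.exp_le_exp.2 key
    _ = C * Real.exp (-(Vfun K θ)) := by rw [Real.exp_add, Real.exp_log hC0]
end
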